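/- arXiv:2601.04559 — 2 statements merged into one kernel-verified Lean document; each statement's English description precedes it below -/
import Mathlib

section
/- Let G be a consistently oriented weighted cycle graph on vertices ℤ/nℤ (finite-weight edges only from i to i+1 mod n, with positive weights), let P(G) be its path completion with shortest path distance ω, and let δ > 0. If σ = [x₁, …, x_k] is a simplex of the Dowker source complex of P(G) at parameter δ (i.e., some vertex v satisfies ω(v, xᵢ) ≤ δ for all i), then there is a vertex x_j ∈ σ with ω(x_j, x_i) ≤ δ for all i; consequently, for every pair x_i, x_j in σ, at least one of ω(x_i, x_j) ≤ δ or ω(x_j, x_i) ≤ δ holds. -/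
/-!
On a consistently oriented cycle the only way from `x` to `y` is to walk forward, so the
shortest path distance from `x` to `y` is the weight of the forward arc from `x` to `y`.
If `v` is within `δ` of every vertex of `σ`, let `j` be the first vertex of `σ` met when
walking forward from `v`: for every `i ∈ σ` the arc from `j` to `i` is a final piece of the
arc from `v` to `i`, so it weighs at most `δ`.
-/

open scoped ENNReal

noncomputable def pathWeight {X : Type*} (ω : X → X → ℝ≥0∞) : List X → ℝ≥0∞
  | [] => 0
  | [_] => 0
  | a :: b :: t => ω a b + pathWeight ω (b :: t)

noncomputable def spd {X : Type*} (ω : X → X → ℝ≥0∞) (x y : X) : ℝ≥0∞ :=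
  ⨅ p : {l : List X // l.head? = some x ∧ l.getLast? = some y}, pathWeight ω p.1

section spd

variable {X : Type*} (ω : X → X → ℝ≥0∞)

theorem spd_self (x : X) : spd ω x x = 0 :=
  le_antisymm (iInf_le_of_le ⟨[x], rfl, rfl⟩ le_rfl) bot_le

theorem spd_le_add_spd (x y z : X) : spd ω x z ≤ ω x y + spd ω y z := by
  rw [spd, spd, ENNReal.add_iInf]
  refine le_iInf fun ⟨l, hhead, hlast⟩ => ?_
  cases l with
  | nil => simp at hhead
  | cons a t =>
    obtain rfl : a = y := by simpa using hhead
    exact iInf_le_of_le ⟨x :: a :: t, rfl, by rwa [List.getLast?_cons_cons]⟩ le_rfl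

theorem le_spd_of_le_add {d : X → X → ℝ≥0∞} (hself : ∀ y, d y y = 0)
    (hstep : ∀ x y z, d x z ≤ ω x y + d y z) (x z : X) : d x z ≤ spd ω x z := by
  refine le_iInf fun p => ?_
  obtain ⟨l, hhead, hlast⟩ := p
  induction l generalizing x with
  | nil => simp at hhead
  | cons a t ih =>
    simp only [List.head?_cons, Option.some.injEq] at hhead
    subst hhead
    cases t with
    | nil =>
      simp only [List.getLast?_singleton, Option.some.injEq] at hlast
      simp [hlast, hself, pathWeight]
    | cons b t =>
      rw [List.getLast?_cons_cons] at hlast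
      exact (hstep a b z).trans (add_le_add_right (ih b rfl hlast) _)

end spd

open Fin.NatCast

theorem Fin.val_sub_eq_val_sub_add_one_add_one {n : ℕ} [NeZero n] {x z : Fin n} (h : z ≠ x) :
    (z - x).val = (z - (x + 1)).val + 1 := by
  obtain ⟨m, rfl⟩ := Nat.exists_eq_succ_of_ne_zero (NeZero.ne n)
  have hsplit : z - x = z - (x + 1) + 1 := by abel
  have hne : z - (x + 1) ≠ Fin.last m := by
    rintro hlast
    rw [hlast, Fin.last_add_one, sub_eq_zero] at hsplit
    exact h hsplit
  rw [hsplit, Fin.val_add_one, if_neg hne]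

section cycle

variable {n : ℕ} [NeZero n]

noncomputable def arcWeight (w : Fin n → ℝ≥0∞) (x : Fin n) (m : ℕ) : ℝ≥0∞ :=
  ∑ k ∈ Finset.range m, w (x + k)

theorem arcWeight_succ (w : Fin n → ℝ≥0∞) (x : Fin n) (m : ℕ) :
    arcWeight w x (m + 1) = w x + arcWeight w (x + 1) m := by
  simp only [arcWeight, Finset.sum_range_succ', Nat.cast_zero, add_zero, Nat.cast_succ,
    add_assoc, add_comm (1 : Fin n)]
  rw [add_comm]

theorem arcWeight_add (w : Fin n → ℝ≥0∞) (x : Fin n) (a b : ℕ) :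
    arcWeight w x (a + b) = arcWeight w x a + arcWeight w (x + a) b := by
  simp only [arcWeight, Finset.sum_range_add, Nat.cast_add, add_assoc]

variable {w : Fin n → ℝ≥0∞} {ω : Fin n → Fin n → ℝ≥0∞}
  (hω : ∀ i j : Fin n, ω i j = if j = i then 0 else if j = i + 1 then w i else ⊤)
include hω

theorem spd_le_arcWeight (x : Fin n) (m : ℕ) : spd ω x (x + m) ≤ arcWeight w x m := by
  induction m generalizing x with
  | zero => simp [spd_self]
  | succ m ih =>
    have hedge : ω x (x + 1) ≤ w x := by
      rw [hω]
      split_ifs <;> simp_all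
    calc spd ω x (x + (m + 1 : ℕ)) = spd ω x (x + 1 + m) := by push_cast; abel_nf
      _ ≤ ω x (x + 1) + spd ω (x + 1) (x + 1 + m) := spd_le_add_spd ω _ _ _
      _ ≤ w x + arcWeight w (x + 1) m := add_le_add hedge (ih _)
      _ = arcWeight w x (m + 1) := (arcWeight_succ w x m).symm

theorem arcWeight_le_spd (x y : Fin n) : arcWeight w x (y - x).val ≤ spd ω x y := by
  refine le_spd_of_le_add ω (d := fun x y => arcWeight w x (y - x).val) (by simp [arcWeight])
    (fun x y z => ?_) x y
  rw [hω]
  split_ifs with hyx hyx1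
  · simp [hyx]
  · by_cases hzx : z = x
    · simp [hzx, arcWeight]
    · rw [Fin.val_sub_eq_val_sub_add_one_add_one hzx, arcWeight_succ, hyx1]
  · simp

theorem spd_eq_arcWeight (x y : Fin n) : spd ω x y = arcWeight w x (y - x).val :=
  le_antisymm (by simpa using spd_le_arcWeight hω x (y - x).val) (arcWeight_le_spd hω x y)

theorem spd_le_spd_of_val_sub_le {v i j : Fin n} (h : (j - v).val ≤ (i - v).val) :
    spd ω j i ≤ spd ω v i := by
  have hsplit : (i - v).val = (j - v).val + (i - j).val := by
    rw [← sub_sub_sub_cancel_right i j v, Fin.sub_val_of_le h]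
    omega
  rw [spd_eq_arcWeight hω, spd_eq_arcWeight hω, hsplit, arcWeight_add, Fin.cast_val_eq_self,
    add_sub_cancel]
  exact le_add_self

end cycle

theorem cycle_simplex_has_ordering_vertex_general {n : ℕ} [NeZero n]
    (w : Fin n → ℝ≥0∞)
    (ω : Fin n → Fin n → ℝ≥0∞)
    (hω : ∀ i j : Fin n, ω i j = if j = i then 0 else if j = i + 1 then w i else ⊤)
    (δ : ℝ≥0∞)
    (σ : Finset (Fin n)) (hσ : σ.Nonempty)
    (hsimp : ∃ v : Fin n, ∀ x ∈ σ, spd ω v x ≤ δ) :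
    (∃ j ∈ σ, ∀ i ∈ σ, spd ω j i ≤ δ) ∧
      ∀ i ∈ σ, ∀ j ∈ σ, spd ω i j ≤ δ ∨ spd ω j i ≤ δ := by
  obtain ⟨v, hv⟩ := hsimp
  have hsees {i j : Fin n} (hi : i ∈ σ) (h : (j - v).val ≤ (i - v).val) : spd ω j i ≤ δ :=
    (spd_le_spd_of_val_sub_le hω h).trans (hv i hi)
  refine ⟨?_, fun i hi j hj => ?_⟩
  · obtain ⟨j, hj, hfirst⟩ := σ.exists_min_image (fun x => (x - v).val) hσ
    exact ⟨j, hj, fun i hi => hsees hi (hfirst i hi)⟩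
  · rcases le_total (i - v).val (j - v).val with h | h
    · exact .inl (hsees hj h)
    · exact .inr (hsees hi h)

/-- In a consistently oriented weighted cycle graph, every simplex of the Dowker
source complex of the path completion at parameter δ has a vertex seeing all its
other vertices within δ; consequently every pair of its vertices sees one another
in at least one direction within δ. -/
theorem cycle_simplex_has_ordering_vertex {n : ℕ} [NeZero n]
    (w : Fin n → ℝ≥0∞) (hw : ∀ i, 0 < w i ∧ w i < ⊤)
    (ω : Fin n → Fin n → ℝ≥0∞)
    (hω : ∀ i j : Fin n, ω i j = if j = i then 0 else if j = i + 1 then w i else ⊤)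
    (δ : ℝ≥0∞) (hδ : 0 < δ)
    (σ : Finset (Fin n)) (hσ : σ.Nonempty)
    (hsimp : ∃ v : Fin n, ∀ x ∈ σ, spd ω v x ≤ δ) :
    (∃ j ∈ σ, ∀ i ∈ σ, spd ω j i ≤ δ) ∧
      ∀ i ∈ σ, ∀ j ∈ σ, spd ω i j ≤ δ ∨ spd ω j i ≤ δ :=
  cycle_simplex_has_ordering_vertex_general w ω hω δ σ hσ hsimp
end

section
/- Let G be a finite digraph that is a disjoint union of directed path graphs, π a partition of its vertices, and h a set of directed paths in G whose vertices meet every cell of π. If |h| = k > 1, then the path completion of the quotient graph G^π admits a source dominating set of size at most k, and therefore its maximal Dowker source complex has trivial reduced homology in all dimensions ≥ k − 1. -/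
/-- The edge relation of the quotient graph of a digraph with edge relation E under
a vertex partition given by a setoid. -/
def quotientEdgeRel {X : Type*} (E : X → X → Prop) (s : Setoid X)
    (A B : Quotient s) : Prop :=
  A ≠ B ∧ ∃ a b : X, Quotient.mk s a = A ∧ Quotient.mk s b = B ∧ E a b

/-- The augmented simplicial boundary operator on real chains over the finite
subsets of a linearly ordered vertex set; "cycles are boundaries" expresses
triviality of *reduced* homology. -/
noncomputable def bdry {X : Type*} [LinearOrder X] (c : Finset X →₀ ℝ) : Finset X →₀ ℝ :=
  c.sum fun σ a =>
    a • ∑ x ∈ σ, Finsupp.single (σ.erase x) ((-1 : ℝ) ^ (σ.filter (fun y => y < x)).card)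

/-!
The heads of the `k` walks dominate the quotient graph: the image of a walk in `G^π` is a walk
starting at the cell of its head, so every cell is reachable from one of at most `k` head cells.
Hence the Dowker source complex is the union of at most `k` full simplices, namely those on the
sets of cells reachable from the head cells. A union of `j` full simplices is acyclic in dimensions
`≥ j - 1`: split a cycle into a part on the last simplex and a part on the others. Their common
boundary lives on the union of the `j - 1` pairwise intersections with the last simplex, where it
bounds by induction; what remains is a cycle on `j - 1` simplices, a boundary by induction, and a
cycle on a single simplex, which is the boundary of its cone.
-/

noncomputable section

open Finsupp

namespace SimplicialChain

section Support

variable {X ι : Type*}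

/-- `d` counts vertices, so these are chains of dimension `d - 1`; `d = 0` is the augmentation. -/
def chainsOn (P : Set (Finset X)) (d : ℕ) : Submodule ℝ (Finset X →₀ ℝ) :=
  supported ℝ ℝ {σ | σ ∈ P ∧ σ.card = d}

theorem mem_chainsOn {P : Set (Finset X)} {d : ℕ} {c : Finset X →₀ ℝ} :
    c ∈ chainsOn P d ↔ ∀ σ ∈ c.support, σ ∈ P ∧ σ.card = d :=
  mem_supported ℝ c

theorem chainsOn_union (P Q : Set (Finset X)) (d : ℕ) :
    chainsOn (P ∪ Q) d = chainsOn P d ⊔ chainsOn Q d := by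
  rw [chainsOn, chainsOn, chainsOn, ← supported_union]
  congr 1
  ext σ
  simp [or_and_right]

theorem chainsOn_inter (P Q : Set (Finset X)) (d : ℕ) :
    chainsOn (P ∩ Q) d = chainsOn P d ⊓ chainsOn Q d := by
  rw [chainsOn, chainsOn, chainsOn, ← supported_inter]
  congr 1
  ext σ
  simp only [Set.mem_inter_iff, Set.mem_ofPred_eq]
  tauto

theorem linearCombination_mem_chainsOn {v : Finset X → Finset X →₀ ℝ} {P Q : Set (Finset X)}
    {d e : ℕ} (hv : ∀ σ ∈ P, σ.card = d → v σ ∈ chainsOn Q e) {c : Finset X →₀ ℝ}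
    (hc : c ∈ chainsOn P d) : linearCombination ℝ v c ∈ chainsOn Q e :=
  Submodule.span_le.2 (Set.image_subset_iff.2 fun σ hσ => hv σ hσ.1 hσ.2)
    (mem_span_image_iff_linearCombination ℝ |>.2 ⟨c, hc, rfl⟩)

/-- The union of the full simplices on the sets `S i`, `i ∈ K`. -/
def coveredBy (K : Finset ι) (S : ι → Set X) : Set (Finset X) := {σ | ∃ i ∈ K, ↑σ ⊆ S i}

theorem coveredBy_insert [DecidableEq ι] (i : ι) (K : Finset ι) (S : ι → Set X) :
    coveredBy (insert i K) S = {σ | ↑σ ⊆ S i} ∪ coveredBy K S := by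
  ext σ
  simp [coveredBy]

theorem setOf_subset_inter_coveredBy (T : Set X) (K : Finset ι) (S : ι → Set X) :
    {σ | ↑σ ⊆ T} ∩ coveredBy K S = coveredBy K fun i => T ∩ S i := by
  ext σ
  simp only [coveredBy, Set.mem_inter_iff, Set.mem_ofPred_eq, Set.subset_inter_iff]
  exact ⟨fun ⟨hT, i, hi, hS⟩ => ⟨i, hi, hT, hS⟩, fun ⟨i, hi, hT, hS⟩ => ⟨hT, i, hi, hS⟩⟩

theorem erase_mem_coveredBy [DecidableEq X] {K : Finset ι} {S : ι → Set X} {σ : Finset X}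
    (hσ : σ ∈ coveredBy K S) (x : X) : σ.erase x ∈ coveredBy K S :=
  let ⟨i, hi, hσi⟩ := hσ
  ⟨i, hi, (Finset.coe_subset.2 (σ.erase_subset x)).trans hσi⟩

theorem chainsOn_coveredBy_empty (S : ι → Set X) (d : ℕ) :
    chainsOn (coveredBy ∅ S) d = ⊥ := by
  simp [chainsOn, coveredBy]

end Support

variable {X : Type*} [LinearOrder X]

def faceSign (σ : Finset X) (x : X) : ℝ := (-1) ^ (σ.filter (· < x)).card

def simplexBdry (σ : Finset X) : Finset X →₀ ℝ :=
  ∑ x ∈ σ, single (σ.erase x) (faceSign σ x)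

def bdryLin : (Finset X →₀ ℝ) →ₗ[ℝ] (Finset X →₀ ℝ) :=
  linearCombination ℝ simplexBdry

theorem bdry_eq_bdryLin (c : Finset X →₀ ℝ) : bdry c = bdryLin c := rfl

def simplexCone (w : X) (σ : Finset X) : Finset X →₀ ℝ :=
  if w ∈ σ then 0 else single (insert w σ) (faceSign σ w)

def coneLin (w : X) : (Finset X →₀ ℝ) →ₗ[ℝ] (Finset X →₀ ℝ) :=
  linearCombination ℝ (simplexCone w)

theorem faceSign_mul_self (σ : Finset X) (x : X) : faceSign σ x * faceSign σ x = 1 := by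
  rw [faceSign, ← pow_add]
  exact Even.neg_one_pow ⟨_, rfl⟩

theorem faceSign_erase_self (σ : Finset X) (x : X) : faceSign (σ.erase x) x = faceSign σ x := by
  rw [faceSign, faceSign, Finset.filter_erase, Finset.erase_eq_of_notMem (by simp)]

theorem faceSign_insert_self {σ : Finset X} {w : X} : faceSign (insert w σ) w = faceSign σ w := by
  rw [faceSign, faceSign, Finset.filter_insert, if_neg (lt_irrefl w)]

theorem faceSign_insert {σ : Finset X} {w : X} (hw : w ∉ σ) (x : X) :
    faceSign (insert w σ) x = (if w < x then -1 else 1) * faceSign σ x := by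
  rw [faceSign, faceSign, Finset.filter_insert]
  split_ifs
  · rw [Finset.card_insert_of_notMem (by simp [hw]), pow_succ, mul_comm]
  · rw [one_mul]

theorem faceSign_erase {σ : Finset X} {x : X} (hx : x ∈ σ) (w : X) :
    faceSign (σ.erase x) w = (if x < w then -1 else 1) * faceSign σ w := by
  by_cases hxw : x < w
  · have h := faceSign_insert (Finset.notMem_erase x σ) w
    rw [Finset.insert_erase hx, if_pos hxw] at h
    rw [if_pos hxw, h, ← mul_assoc]
    norm_num
  · rw [if_neg hxw, one_mul, faceSign, faceSign, Finset.filter_erase,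
      Finset.erase_eq_of_notMem (by simp [hxw])]

theorem sign_lt_add_sign_gt {x y : X} (hxy : x ≠ y) :
    (if x < y then (-1 : ℝ) else 1) + (if y < x then -1 else 1) = 0 := by
  rcases hxy.lt_or_gt with h | h <;> simp [h, h.not_gt]

theorem faceSign_mul_faceSign_erase_swap {σ : Finset X} {x y : X} (hx : x ∈ σ) (hy : y ∈ σ)
    (hxy : x ≠ y) :
    faceSign σ x * faceSign (σ.erase x) y + faceSign σ y * faceSign (σ.erase y) x = 0 := by
  rw [faceSign_erase hx, faceSign_erase hy]
  linear_combination faceSign σ x * faceSign σ y * sign_lt_add_sign_gt hxy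

theorem faceSign_mul_faceSign_insert {σ : Finset X} {w x : X} (hw : w ∉ σ) (hx : x ∈ σ) :
    faceSign σ w * faceSign (insert w σ) x + faceSign σ x * faceSign (σ.erase x) w = 0 := by
  have hxw : x ≠ w := fun h => hw (h ▸ hx)
  rw [faceSign_insert hw, faceSign_erase hx]
  linear_combination faceSign σ x * faceSign σ w * sign_lt_add_sign_gt hxw.symm

theorem bdryLin_single (σ : Finset X) (r : ℝ) : bdryLin (single σ r) = r • simplexBdry σ :=
  linearCombination_single ℝ r σ

theorem coneLin_single (w : X) (σ : Finset X) (r : ℝ) :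
    coneLin w (single σ r) = r • simplexCone w σ :=
  linearCombination_single ℝ r σ

theorem bdryLin_simplexBdry (σ : Finset X) : bdryLin (simplexBdry σ) = 0 := by
  have hface : ∀ x ∈ σ, bdryLin (single (σ.erase x) (faceSign σ x)) =
      ∑ y ∈ σ.erase x, single ((σ.erase x).erase y) (faceSign σ x * faceSign (σ.erase x) y) := by
    intro x _
    simp only [bdryLin_single, simplexBdry, Finset.smul_sum, smul_single, smul_eq_mul]
  rw [simplexBdry, map_sum, Finset.sum_congr rfl hface, Finset.sum_sigma']
  refine Finset.sum_involution (fun p _ => ⟨p.2, p.1⟩) ?_ ?_ ?_ fun _ _ => rfl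
  · rintro ⟨x, y⟩ hp
    obtain ⟨hx, hyx, hy⟩ : x ∈ σ ∧ y ≠ x ∧ y ∈ σ := by simpa using hp
    rw [Finset.erase_right_comm, ← single_add,
      faceSign_mul_faceSign_erase_swap hx hy hyx.symm, single_zero]
  · rintro ⟨x, y⟩ hp _ h
    obtain ⟨-, hyx, -⟩ : x ∈ σ ∧ y ≠ x ∧ y ∈ σ := by simpa using hp
    exact hyx (congrArg Sigma.fst h)
  · rintro ⟨x, y⟩ hp
    obtain ⟨hx, hyx, hy⟩ : x ∈ σ ∧ y ≠ x ∧ y ∈ σ := by simpa using hp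
    simpa using ⟨hy, hyx.symm, hx⟩

theorem bdryLin_bdryLin (c : Finset X →₀ ℝ) : bdryLin (bdryLin c) = 0 := by
  induction c using Finsupp.induction_linear with
  | zero => simp
  | add f g hf hg => simp [hf, hg]
  | single σ r => simp [bdryLin_single, bdryLin_simplexBdry]

theorem bdryLin_simplexCone_add_coneLin_simplexBdry (w : X) (σ : Finset X) :
    bdryLin (simplexCone w σ) + coneLin w (simplexBdry σ) = single σ 1 := by
  by_cases hw : w ∈ σ
  · rw [simplexCone, if_pos hw, map_zero, zero_add, simplexBdry, map_sum,
      Finset.sum_eq_single_of_mem w hw]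
    · rw [coneLin_single, simplexCone, if_neg (Finset.notMem_erase w σ), Finset.insert_erase hw,
        faceSign_erase_self, smul_single, smul_eq_mul, faceSign_mul_self]
    · intro x hx hxw
      rw [coneLin_single, simplexCone, if_pos (Finset.mem_erase.2 ⟨Ne.symm hxw, hw⟩), smul_zero]
  · have hpair : ∀ x ∈ σ, faceSign σ w • single ((insert w σ).erase x) (faceSign (insert w σ) x)
        + coneLin w (single (σ.erase x) (faceSign σ x)) = 0 := by
      intro x hx
      have hxw : x ≠ w := fun h => hw (h ▸ hx)
      rw [coneLin_single, simplexCone, if_neg fun h => hw (Finset.mem_of_mem_erase h),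
        Finset.erase_insert_of_ne hxw.symm, smul_single, smul_single, ← single_add,
        smul_eq_mul, smul_eq_mul, faceSign_mul_faceSign_insert hw hx, single_zero]
    rw [simplexCone, if_neg hw, bdryLin_single, simplexBdry, Finset.sum_insert hw,
      Finset.erase_insert hw, faceSign_insert_self, smul_add, smul_single, smul_eq_mul,
      faceSign_mul_self, Finset.smul_sum, simplexBdry, map_sum, add_assoc,
      ← Finset.sum_add_distrib, Finset.sum_eq_zero hpair, add_zero]

theorem bdryLin_coneLin_add_coneLin_bdryLin (w : X) (c : Finset X →₀ ℝ) :
    bdryLin (coneLin w c) + coneLin w (bdryLin c) = c := by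
  induction c using Finsupp.induction_linear with
  | zero => simp
  | add f g hf hg =>
    rw [map_add, map_add, map_add, map_add, add_add_add_comm, hf, hg]
  | single σ r =>
    rw [coneLin_single, bdryLin_single, map_smul, map_smul, ← smul_add,
      bdryLin_simplexCone_add_coneLin_simplexBdry, smul_single, smul_eq_mul, mul_one]

theorem bdryLin_mem_chainsOn {P : Set (Finset X)} (hP : ∀ σ ∈ P, ∀ x, σ.erase x ∈ P) {d : ℕ}
    {c : Finset X →₀ ℝ} (hc : c ∈ chainsOn P (d + 1)) : bdryLin c ∈ chainsOn P d := by
  refine linearCombination_mem_chainsOn (fun σ hσ hcard => ?_) hc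
  refine Submodule.sum_mem _ fun x hx => single_mem_supported ℝ _ ⟨hP σ hσ x, ?_⟩
  rw [Finset.card_erase_of_mem hx, hcard, Nat.add_sub_cancel]

theorem coneLin_mem_chainsOn {T : Set X} {w : X} (hw : w ∈ T) {d : ℕ} {c : Finset X →₀ ℝ}
    (hc : c ∈ chainsOn {σ | ↑σ ⊆ T} d) : coneLin w c ∈ chainsOn {σ | ↑σ ⊆ T} (d + 1) := by
  refine linearCombination_mem_chainsOn (fun σ hσ hcard => ?_) hc
  unfold simplexCone
  split_ifs with hwσ
  · exact Submodule.zero_mem _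
  · refine single_mem_supported ℝ _ ⟨?_, by rw [Finset.card_insert_of_notMem hwσ, hcard]⟩
    simpa [Set.insert_subset_iff] using ⟨hw, hσ⟩

theorem exists_bdryLin_eq_of_subset {T : Set X} {d : ℕ} (hd : d ≠ 0) {z : Finset X →₀ ℝ}
    (hz : z ∈ chainsOn {σ | ↑σ ⊆ T} d) (hcyc : bdryLin z = 0) :
    ∃ b ∈ chainsOn {σ | ↑σ ⊆ T} (d + 1), bdryLin b = z := by
  obtain rfl | hz0 := eq_or_ne z 0
  · exact ⟨0, Submodule.zero_mem _, map_zero _⟩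
  obtain ⟨σ, hσ⟩ := support_nonempty_iff.2 hz0
  obtain ⟨hσT, hcard⟩ := mem_chainsOn.1 hz σ hσ
  obtain ⟨w, hw⟩ := Finset.card_ne_zero.1 (hcard ▸ hd)
  refine ⟨coneLin w z, coneLin_mem_chainsOn (hσT hw) hz, ?_⟩
  simpa [hcyc] using bdryLin_coneLin_add_coneLin_bdryLin w z

theorem exists_bdryLin_eq_of_card_le {ι : Type*} {K : Finset ι} {S : ι → Set X} {d : ℕ}
    (hK : K.card ≤ d) {c : Finset X →₀ ℝ} (hc : c ∈ chainsOn (coveredBy K S) d)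
    (hcyc : bdryLin c = 0) : ∃ b ∈ chainsOn (coveredBy K S) (d + 1), bdryLin b = c := by
  classical
  induction K using Finset.induction_on generalizing S d c with
  | empty =>
    rw [chainsOn_coveredBy_empty, Submodule.mem_bot] at hc
    exact ⟨0, Submodule.zero_mem _, by rw [hc, map_zero]⟩
  | insert i K hi ih =>
    rw [Finset.card_insert_of_notMem hi] at hK
    obtain ⟨d, rfl⟩ : ∃ d', d = d' + 1 := ⟨d - 1, by omega⟩
    rw [coveredBy_insert, chainsOn_union] at hc ⊢
    obtain ⟨cT, hcT, cK, hcK, rfl⟩ := Submodule.mem_sup.1 hc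
    -- `∂ cK = -∂ cT` lies on the intersections `S i ∩ S l`, indexed again by `K`.
    have hz : bdryLin cK ∈ chainsOn (coveredBy K fun l => S i ∩ S l) d := by
      have hneg : bdryLin cK = -bdryLin cT := eq_neg_of_add_eq_zero_right (by rwa [map_add] at hcyc)
      rw [← setOf_subset_inter_coveredBy, chainsOn_inter]
      refine ⟨hneg ▸ neg_mem (bdryLin_mem_chainsOn (fun σ hσ x => ?_) hcT),
        bdryLin_mem_chainsOn (fun σ hσ x => erase_mem_coveredBy hσ x) hcK⟩
      exact (Finset.coe_subset.2 (σ.erase_subset x)).trans hσ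
    obtain ⟨e, he, hbe⟩ := ih (by omega) hz (bdryLin_bdryLin cK)
    rw [← setOf_subset_inter_coveredBy, chainsOn_inter] at he
    obtain ⟨b₁, hb₁, hbb₁⟩ := ih (by omega) (sub_mem hcK he.2) (by rw [map_sub, hbe, sub_self])
    obtain ⟨b₂, hb₂, hbb₂⟩ := exists_bdryLin_eq_of_subset d.succ_ne_zero (add_mem hcT he.1)
      (by rw [map_add, hbe, ← map_add, hcyc])
    exact ⟨b₂ + b₁, Submodule.add_mem_sup hb₂ hb₁, by rw [map_add, hbb₁, hbb₂]; abel⟩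

end SimplicialChain

end

open Relation SimplicialChain

section QuotientGraph

variable {Y : Type*} {E : Y → Y → Prop} (s : Setoid Y)

theorem reflTransGen_quotientEdgeRel_of_rel {a b : Y} (hab : E a b) :
    ReflTransGen (quotientEdgeRel E s) (Quotient.mk s a) (Quotient.mk s b) := by
  by_cases hq : Quotient.mk s a = Quotient.mk s b
  · rw [hq]
  · exact .single ⟨hq, a, b, rfl, rfl, hab⟩

theorem reflTransGen_quotientEdgeRel_head {l : List Y} (hl : l.IsChain E) (hne : l ≠ []) {x : Y}
    (hx : x ∈ l) :
    ReflTransGen (quotientEdgeRel E s) (Quotient.mk s (l.head hne)) (Quotient.mk s x) :=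
  hl.induction (fun y => ReflTransGen (quotientEdgeRel E s) (Quotient.mk s (l.head hne)) ⟦y⟧) l
    (fun _ _ hyz hy => hy.trans (reflTransGen_quotientEdgeRel_of_rel s hyz))
    (fun _ => .refl) x hx

theorem exists_dominating_of_isChain_cover (h : Finset (List Y))
    (hwalks : ∀ p ∈ h, p ≠ [] ∧ p.IsChain E)
    (hspan : ∀ A : Quotient s, ∃ p ∈ h, ∃ x ∈ p, Quotient.mk s x = A) :
    ∃ K : Finset (Quotient s), K.card ≤ h.card ∧
      ∀ A, ∃ B ∈ K, ReflTransGen (quotientEdgeRel E s) B A := by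
  classical
  let head (p : h) : Quotient s := Quotient.mk s (p.1.head (hwalks p.1 p.2).1)
  refine ⟨h.attach.image head, Finset.card_image_le.trans h.card_attach.le, fun A => ?_⟩
  obtain ⟨p, hp, x, hx, rfl⟩ := hspan A
  exact ⟨head ⟨p, hp⟩, Finset.mem_image_of_mem _ (h.mem_attach _),
    reflTransGen_quotientEdgeRel_head s (hwalks p hp).2 _ hx⟩

end QuotientGraph

section Dowker

variable {Y : Type*}

def sourceComplex (R : Y → Y → Prop) : Set (Finset Y) := {σ | ∃ v, ∀ A ∈ σ, R v A}

theorem sourceComplex_eq_coveredBy {R : Y → Y → Prop} [IsTrans Y R] {K : Finset Y}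
    (hK : ∀ A, ∃ B ∈ K, R B A) : sourceComplex R = coveredBy K fun B => {A | R B A} := by
  ext σ
  constructor
  · rintro ⟨v, hv⟩
    obtain ⟨B, hB, hBv⟩ := hK v
    exact ⟨B, hB, fun A hA => _root_.trans hBv (hv A hA)⟩
  · rintro ⟨B, -, hB⟩
    exact ⟨B, fun A hA => hB hA⟩

theorem exists_bdry_eq_of_dominating [LinearOrder Y] {R : Y → Y → Prop} [IsTrans Y R]
    {K : Finset Y} (hK : ∀ A, ∃ B ∈ K, R B A) {n : ℕ} (hn : K.card ≤ n + 1)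
    {c : Finset Y →₀ ℝ} (hc : c ∈ chainsOn (sourceComplex R) (n + 1)) (hcyc : bdry c = 0) :
    ∃ b ∈ chainsOn (sourceComplex R) (n + 2), bdry b = c := by
  rw [sourceComplex_eq_coveredBy hK] at hc ⊢
  simp only [bdry_eq_bdryLin] at hcyc ⊢
  exact exists_bdryLin_eq_of_card_le hn hc hcyc

end Dowker

theorem disjoint_paths_quotient_dominating_and_homology_general
    {ι : Type*} (m : ι → ℕ)
    (E : (Σ i : ι, Fin (m i)) → (Σ i : ι, Fin (m i)) → Prop)
    (s : Setoid (Σ i : ι, Fin (m i)))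
    (h : Finset (List (Σ i : ι, Fin (m i)))) (k : ℕ) (hcard : h.card = k)
    (hwalks : ∀ p ∈ h, p ≠ [] ∧ p.Chain' E)
    (hspan : ∀ A : Quotient s, ∃ p ∈ h, ∃ x ∈ p, Quotient.mk s x = A) :
    (∃ K : Finset (Quotient s), K.card ≤ k ∧
        ∀ A : Quotient s, ∃ B ∈ K, Relation.ReflTransGen (quotientEdgeRel E s) B A) ∧
      ∀ L : LinearOrder (Quotient s), ∀ n : ℕ, k - 1 ≤ n →
        ∀ c : Finset (Quotient s) →₀ ℝ,
          (∀ σ ∈ c.support,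
              (∃ v : Quotient s, ∀ A ∈ σ, Relation.ReflTransGen (quotientEdgeRel E s) v A) ∧
                σ.card = n + 1) →
          @bdry _ L c = 0 →
          ∃ b : Finset (Quotient s) →₀ ℝ,
            (∀ σ ∈ b.support,
                (∃ v : Quotient s, ∀ A ∈ σ, Relation.ReflTransGen (quotientEdgeRel E s) v A) ∧
                  σ.card = n + 2) ∧
              @bdry _ L b = c := by
  obtain ⟨K, hKk, hK⟩ := exists_dominating_of_isChain_cover s h hwalks hspan
  refine ⟨⟨K, hcard ▸ hKk, hK⟩, fun L n hkn c hc hcyc => ?_⟩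
  obtain ⟨b, hb, hbc⟩ :=
    exists_bdry_eq_of_dominating hK (by omega) (mem_chainsOn.2 hc) hcyc
  exact ⟨b, mem_chainsOn.1 hb, hbc⟩

/-- Let G be a disjoint union of directed path graphs (vertex type Σ i, Fin (m i),
with edges going from each vertex to its successor within a component), π a vertex
partition, and h a set of k > 1 directed paths of G whose vertices meet every cell.
Then the path completion of the quotient graph admits a source dominating set of
size at most k, and the maximal Dowker source complex of the quotient has trivial
reduced homology in all dimensions ≥ k - 1. -/
theorem disjoint_paths_quotient_dominating_and_homology
    {ι : Type*} [Fintype ι] [DecidableEq ι] (m : ι → ℕ)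
    (E : (Σ i : ι, Fin (m i)) → (Σ i : ι, Fin (m i)) → Prop)
    (hE : ∀ u v : Σ i : ι, Fin (m i), E u v ↔ u.1 = v.1 ∧ (v.2 : ℕ) = (u.2 : ℕ) + 1)
    (s : Setoid (Σ i : ι, Fin (m i)))
    (h : Finset (List (Σ i : ι, Fin (m i)))) (k : ℕ) (hk : 1 < k) (hcard : h.card = k)
    (hwalks : ∀ p ∈ h, p ≠ [] ∧ p.Chain' E)
    (hspan : ∀ A : Quotient s, ∃ p ∈ h, ∃ x ∈ p, Quotient.mk s x = A) :
    (∃ K : Finset (Quotient s), K.card ≤ k ∧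
        ∀ A : Quotient s, ∃ B ∈ K, Relation.ReflTransGen (quotientEdgeRel E s) B A) ∧
      ∀ L : LinearOrder (Quotient s), ∀ n : ℕ, k - 1 ≤ n →
        ∀ c : Finset (Quotient s) →₀ ℝ,
          (∀ σ ∈ c.support,
              (∃ v : Quotient s, ∀ A ∈ σ, Relation.ReflTransGen (quotientEdgeRel E s) v A) ∧
                σ.card = n + 1) →
          @bdry _ L c = 0 →
          ∃ b : Finset (Quotient s) →₀ ℝ,
            (∀ σ ∈ b.support,
                (∃ v : Quotient s, ∀ A ∈ σ, Relation.ReflTransGen (quotientEdgeRel E s) v A) ∧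
                  σ.card = n + 2) ∧
              @bdry _ L b = c :=
  disjoint_paths_quotient_dominating_and_homology_general m E s h k hcard hwalks hspan
end
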